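/- Let d ≥ 1 be an integer and C₁, C₂ > 0. There exists a constant C > 0, depending only on d, C₁ and C₂, such that for all ρ₁, ρ₂ ∈ [0, C₁] and all u₁, u₂ ∈ ℝ^d with |u₁| ≤ C₂ and |u₂| ≤ C₂, one has ∫_{ℝ^d} (1 + |v|²) | 1_{|v-u₁|^d ≤ c_d ρ₁} - 1_{|v-u₂|^d ≤ c_d ρ₂} | dv ≤ C ( |ρ₁ - ρ₂| + |u₁ - u₂| ). -/

import Mathlib

open MeasureTheory Real Metric

noncomputable section

/-- Surface area of the unit sphere `S^{s-1}` in `ℝ^s`, `|S_{s-1}| = 2 π^{s/2} / Γ(s/2)`. -/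
def sphA (s : ℝ) : ℝ := 2 * Real.pi ^ (s / 2) / Real.Gamma (s / 2)

/-- The constant `c_d = d / |S_{d-1}|`. -/
def cdConst (d : ℕ) : ℝ := d / sphA d

/-- The indicator-type equilibrium function `M_{ρ,u}(v) = 1_{|v-u|^d ≤ c_d ρ}`
(the case `γ = (d+2)/d`). -/
def Mball (d : ℕ) (ρ : ℝ) (u v : EuclideanSpace ℝ (Fin d)) : ℝ :=
  if ‖v - u‖ ^ d ≤ cdConst d * ρ then 1 else 0

/-- Elementary estimate: `s^n - t^n ≤ n R^{n-1} (s - t)` for `0 ≤ t ≤ s ≤ R`. -/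
lemma pow_diff_le_aux (n : ℕ) {s t R : ℝ} (ht : 0 ≤ t) (hts : t ≤ s) (hsR : s ≤ R) :
    s ^ n - t ^ n ≤ n * R ^ (n - 1) * (s - t) := by
  induction n with
  | zero => simp
  | succ n ih =>
    have hs : 0 ≤ s := ht.trans hts
    have hR : 0 ≤ R := hs.trans hsR
    have h2 : 0 ≤ s ^ n - t ^ n := sub_nonneg.2 (pow_le_pow_left₀ ht hts n)
    have htn : t ^ n ≤ R ^ n := pow_le_pow_left₀ ht (hts.trans hsR) n
    have key : R * (↑n * R ^ (n - 1)) ≤ ↑n * R ^ n := by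
      cases n with
      | zero => simp
      | succ m =>
        have hpow : R ^ (m + 1 - 1) * R = R ^ (m + 1) := by
          rw [Nat.add_sub_cancel, ← pow_succ]
        nlinarith [pow_nonneg hR m]
    have b1 : s * (s ^ n - t ^ n) ≤ R * (↑n * R ^ (n - 1) * (s - t)) :=
      calc s * (s ^ n - t ^ n) ≤ R * (s ^ n - t ^ n) := mul_le_mul_of_nonneg_right hsR h2
        _ ≤ R * (↑n * R ^ (n - 1) * (s - t)) := mul_le_mul_of_nonneg_left ih hR
    have b2 : (s - t) * t ^ n ≤ (s - t) * R ^ n :=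
      mul_le_mul_of_nonneg_left htn (sub_nonneg.2 hts)
    have b3 := mul_le_mul_of_nonneg_right key (sub_nonneg.2 hts)
    have e1 : s ^ (n + 1) - t ^ (n + 1) = s * (s ^ n - t ^ n) + (s - t) * t ^ n := by ring
    have : s ^ (n + 1) - t ^ (n + 1) ≤ ↑n * R ^ n * (s - t) + (s - t) * R ^ n := by
      nlinarith [b1, b2, b3]
    calc s ^ (n + 1) - t ^ (n + 1) ≤ ↑n * R ^ n * (s - t) + (s - t) * R ^ n := this
      _ = (↑(n + 1)) * R ^ (n + 1 - 1) * (s - t) := by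
          rw [Nat.add_sub_cancel]; push_cast; ring

/-- Volume of a closed spherical shell in `ℝ^d`. -/
lemma vol_shell (d : ℕ) (u : EuclideanSpace ℝ (Fin d)) {t s : ℝ} (ht : 0 ≤ t) (hts : t ≤ s) :
    (volume (closedBall u s \ closedBall u t)).toReal
      = (s ^ d - t ^ d) * (volume (ball (0 : EuclideanSpace ℝ (Fin d)) 1)).toReal := by
  have hs : 0 ≤ s := ht.trans hts
  have hsub : closedBall u t ⊆ closedBall u s := closedBall_subset_closedBall hts
  rw [measure_diff hsub measurableSet_closedBall.nullMeasurableSet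
      measure_closedBall_lt_top.ne,
    Measure.addHaar_closedBall _ u hs, Measure.addHaar_closedBall _ u ht,
    finrank_euclideanSpace_fin]
  have h1 : ENNReal.ofReal (t ^ d) * volume (ball (0 : EuclideanSpace ℝ (Fin d)) 1)
      ≤ ENNReal.ofReal (s ^ d) * volume (ball (0 : EuclideanSpace ℝ (Fin d)) 1) :=
    mul_le_mul_left (ENNReal.ofReal_le_ofReal (pow_le_pow_left₀ ht hts d)) _
  rw [ENNReal.toReal_sub_of_le h1
      (ENNReal.mul_ne_top ENNReal.ofReal_ne_top measure_ball_lt_top.ne),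
    ENNReal.toReal_mul, ENNReal.toReal_mul, ENNReal.toReal_ofReal (pow_nonneg ht d),
    ENNReal.toReal_ofReal (pow_nonneg hs d)]
  ring

/-- Integral bound: if `|g| ≤ 1_D` with `D` contained in a ball of radius `R`, then
`∫ (1+|v|²)|g| ≤ (1+R²) vol(D)`. -/
lemma int_weight_indicator_le (d : ℕ) {D : Set (EuclideanSpace ℝ (Fin d))}
    (hD : MeasurableSet D) {R : ℝ} (hR : 0 ≤ R) (hDsub : D ⊆ closedBall 0 R)
    {g : EuclideanSpace ℝ (Fin d) → ℝ} (hg : Measurable g)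
    (hgD : ∀ v, |g v| ≤ D.indicator 1 v) :
    (∫ v, (1 + ‖v‖ ^ 2) * |g v|) ≤ (1 + R ^ 2) * (volume D).toReal := by
  have hDfin : volume D < ⊤ := (measure_mono hDsub).trans_lt measure_closedBall_lt_top
  have hpt : ∀ v, (1 + ‖v‖ ^ 2) * |g v| ≤ D.indicator (fun _ => 1 + R ^ 2) v := by
    intro v
    by_cases hv : v ∈ D
    · rw [Set.indicator_of_mem hv]
      have hvR : ‖v‖ ≤ R := by
        have := hDsub hv
        rwa [mem_closedBall, dist_zero_right] at this
      have h1 : 1 + ‖v‖ ^ 2 ≤ 1 + R ^ 2 := by nlinarith [norm_nonneg v]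
      have h2 : |g v| ≤ 1 := by
        have := hgD v
        rwa [Set.indicator_of_mem hv, Pi.one_apply] at this
      calc (1 + ‖v‖ ^ 2) * |g v| ≤ (1 + R ^ 2) * 1 :=
            mul_le_mul h1 h2 (abs_nonneg _) (by nlinarith)
        _ = 1 + R ^ 2 := mul_one _
    · rw [Set.indicator_of_notMem hv]
      have := hgD v
      rw [Set.indicator_of_notMem hv] at this
      have hz : |g v| = 0 := le_antisymm this (abs_nonneg _)
      rw [hz, mul_zero]
  have hint2 : Integrable (D.indicator fun _ => (1 + R ^ 2 : ℝ)) :=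
    (integrableOn_const hDfin.ne).integrable_indicator hD
  have hmeas : Measurable (fun v : EuclideanSpace ℝ (Fin d) => (1 + ‖v‖ ^ 2) * |g v|) :=
    ((measurable_const.add ((continuous_norm.measurable).pow measurable_const)).mul hg.abs)
  have hint1 : Integrable (fun v : EuclideanSpace ℝ (Fin d) => (1 + ‖v‖ ^ 2) * |g v|) := by
    refine hint2.mono' hmeas.aestronglyMeasurable (Filter.Eventually.of_forall fun v => ?_)
    have h0 : 0 ≤ (1 + ‖v‖ ^ 2) * |g v| := by positivity
    rw [Real.norm_eq_abs, abs_of_nonneg h0]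
    exact hpt v
  calc (∫ v, (1 + ‖v‖ ^ 2) * |g v|)
      ≤ ∫ v, D.indicator (fun _ => 1 + R ^ 2) v := integral_mono hint1 hint2 hpt
    _ = (volume D).toReal * (1 + R ^ 2) := by
        rw [integral_indicator_const (1 + R ^ 2 : ℝ) hD, smul_eq_mul]; rfl
    _ = (1 + R ^ 2) * (volume D).toReal := mul_comm _ _

set_option maxHeartbeats 1000000 in
/-- Lipschitz estimate for the indicator-type equilibrium function in the weighted space
`L¹_2`: for bounded densities and bulk velocities,
`∫ (1+|v|²) |M_{ρ₁,u₁} - M_{ρ₂,u₂}| dv ≤ C (|ρ₁-ρ₂| + |u₁-u₂|)`. -/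
theorem lipschitz_Mball (d : ℕ) (hd : 1 ≤ d) (C₁ C₂ : ℝ) (hC₁ : 0 < C₁) (hC₂ : 0 < C₂) :
    ∃ C : ℝ, 0 < C ∧
      ∀ ρ₁ ρ₂ : ℝ, ρ₁ ∈ Set.Icc 0 C₁ → ρ₂ ∈ Set.Icc 0 C₁ →
      ∀ u₁ u₂ : EuclideanSpace ℝ (Fin d), ‖u₁‖ ≤ C₂ → ‖u₂‖ ≤ C₂ →
        (∫ v : EuclideanSpace ℝ (Fin d),
            (1 + ‖v‖ ^ 2) * |Mball d ρ₁ u₁ v - Mball d ρ₂ u₂ v|) ≤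
          C * (|ρ₁ - ρ₂| + ‖u₁ - u₂‖) := by
  classical
  have hd0 : (d : ℝ) ≠ 0 := Nat.cast_ne_zero.2 (by omega)
  have hdR : (0 : ℝ) < d := by exact_mod_cast hd
  have hc : 0 < cdConst d := by
    have h1 : (0 : ℝ) < (d : ℝ) / 2 := by positivity
    have h2 := Real.Gamma_pos_of_pos h1
    have h3 : (0 : ℝ) < Real.pi ^ ((d : ℝ) / 2) := Real.rpow_pos_of_pos Real.pi_pos _
    have hsph : 0 < sphA d := by unfold sphA; positivity
    exact div_pos hdR hsph
  -- powers of the radii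
  have hpowd : ∀ x : ℝ, 0 ≤ x → (x ^ ((d : ℝ)⁻¹)) ^ d = x := by
    intro x hx
    rw [← Real.rpow_natCast (x ^ ((d : ℝ)⁻¹)) d, ← Real.rpow_mul hx,
      inv_mul_cancel₀ hd0, Real.rpow_one]
  set ω := (volume (ball (0 : EuclideanSpace ℝ (Fin d)) 1)).toReal with hωdef
  have hω0 : 0 ≤ ω := hωdef ▸ ENNReal.toReal_nonneg
  set rmax := (cdConst d * C₁) ^ ((d : ℝ)⁻¹) with hrmaxdef
  have hrmax0 : 0 ≤ rmax := Real.rpow_nonneg (by positivity) _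
  set R := 3 * C₂ + rmax with hRdef
  have hR0 : 0 < R := by positivity
  have hCge : 0 ≤ (1 + R ^ 2) * ω * (cdConst d + 2 * d * R ^ (d - 1)) :=
    mul_nonneg (mul_nonneg (by positivity) hω0) (by positivity)
  refine ⟨(1 + R ^ 2) * ω * (cdConst d + 2 * d * R ^ (d - 1)) + 1, by linarith, ?_⟩
  intro ρ₁ ρ₂ hρ₁ hρ₂ u₁ u₂ hu₁ hu₂
  obtain ⟨hρ₁0, hρ₁C⟩ := hρ₁
  obtain ⟨hρ₂0, hρ₂C⟩ := hρ₂
  set r₁ := (cdConst d * ρ₁) ^ ((d : ℝ)⁻¹) with hr₁def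
  set r₂ := (cdConst d * ρ₂) ^ ((d : ℝ)⁻¹) with hr₂def
  have hr₁0 : 0 ≤ r₁ := Real.rpow_nonneg (by positivity) _
  have hr₂0 : 0 ≤ r₂ := Real.rpow_nonneg (by positivity) _
  have hr₁max : r₁ ≤ rmax :=
    Real.rpow_le_rpow (by positivity) (mul_le_mul_of_nonneg_left hρ₁C hc.le) (by positivity)
  have hr₂max : r₂ ≤ rmax :=
    Real.rpow_le_rpow (by positivity) (mul_le_mul_of_nonneg_left hρ₂C hc.le) (by positivity)
  have hr₁d : r₁ ^ d = cdConst d * ρ₁ := hpowd _ (by positivity)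
  have hr₂d : r₂ ^ d = cdConst d * ρ₂ := hpowd _ (by positivity)
  set h := ‖u₁ - u₂‖ with hhdef
  have hh0 : 0 ≤ h := norm_nonneg _
  have hh2 : h ≤ 2 * C₂ := (norm_sub_le _ _).trans (by linarith)
  -- membership characterizations
  have hmem₁ : ∀ v : EuclideanSpace ℝ (Fin d),
      Mball d ρ₁ u₁ v = if v ∈ closedBall u₁ r₁ then 1 else 0 := by
    intro v
    unfold Mball
    congr 1
    rw [eq_iff_iff, mem_closedBall, dist_eq_norm, ← hr₁d,
      pow_le_pow_iff_left₀ (norm_nonneg _) hr₁0 (by omega)]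
  have hmem₂ : ∀ v : EuclideanSpace ℝ (Fin d),
      Mball d ρ₂ u₂ v = if v ∈ closedBall u₂ r₂ then 1 else 0 := by
    intro v
    unfold Mball
    congr 1
    rw [eq_iff_iff, mem_closedBall, dist_eq_norm, ← hr₂d,
      pow_le_pow_iff_left₀ (norm_nonneg _) hr₂0 (by omega)]
  -- the three exceptional sets
  set D1 := closedBall u₁ (max r₁ r₂) \ closedBall u₁ (min r₁ r₂) with hD1def
  set D2 := closedBall u₁ (r₂ + h) \ closedBall u₁ r₂ with hD2def
  set D3 := closedBall u₂ (r₂ + h) \ closedBall u₂ r₂ with hD3def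
  set D := D1 ∪ D2 ∪ D3 with hDdef
  have hD1meas : MeasurableSet D1 := measurableSet_closedBall.diff measurableSet_closedBall
  have hD2meas : MeasurableSet D2 := measurableSet_closedBall.diff measurableSet_closedBall
  have hD3meas : MeasurableSet D3 := measurableSet_closedBall.diff measurableSet_closedBall
  have hDmeas : MeasurableSet D := (hD1meas.union hD2meas).union hD3meas
  -- pointwise bound by the indicator of D
  have hpt : ∀ v, |Mball d ρ₁ u₁ v - Mball d ρ₂ u₂ v| ≤ D.indicator 1 v := by
    intro v
    by_cases hv : v ∈ D
    · rw [Set.indicator_of_mem hv, Pi.one_apply, hmem₁, hmem₂]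
      split <;> split <;> norm_num
    · rw [Set.indicator_of_notMem hv]
      have hiff : (v ∈ closedBall u₁ r₁) ↔ (v ∈ closedBall u₂ r₂) := by
        have hd12 : ‖v - u₂‖ ≤ ‖v - u₁‖ + h := by
          calc ‖v - u₂‖ = ‖(v - u₁) + (u₁ - u₂)‖ := by rw [sub_add_sub_cancel]
            _ ≤ ‖v - u₁‖ + h := norm_add_le _ _
        have hd21 : ‖v - u₁‖ ≤ ‖v - u₂‖ + h := by
          calc ‖v - u₁‖ = ‖(v - u₂) + (u₂ - u₁)‖ := by rw [sub_add_sub_cancel]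
            _ ≤ ‖v - u₂‖ + ‖u₂ - u₁‖ := norm_add_le _ _
            _ = ‖v - u₂‖ + h := by rw [norm_sub_rev u₂ u₁]
        constructor
        · intro h1
          by_contra h2
          rw [mem_closedBall, dist_eq_norm] at h1 h2
          push_neg at h2
          apply hv
          by_cases hcase : ‖v - u₁‖ ≤ r₂
          · refine Or.inr ⟨?_, ?_⟩
            · rw [mem_closedBall, dist_eq_norm]; linarith
            · rw [mem_closedBall, dist_eq_norm]; push_neg; linarith
          · push_neg at hcase
            refine Or.inl (Or.inl ⟨?_, ?_⟩)
            · rw [mem_closedBall, dist_eq_norm]; exact h1.trans (le_max_left _ _)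
            · rw [mem_closedBall, dist_eq_norm]; push_neg
              exact lt_of_le_of_lt (min_le_right _ _) hcase
        · intro h1
          by_contra h2
          rw [mem_closedBall, dist_eq_norm] at h1 h2
          push_neg at h2
          apply hv
          by_cases hcase : ‖v - u₁‖ ≤ r₂
          · refine Or.inl (Or.inl ⟨?_, ?_⟩)
            · rw [mem_closedBall, dist_eq_norm]; exact hcase.trans (le_max_right _ _)
            · rw [mem_closedBall, dist_eq_norm]; push_neg
              exact lt_of_le_of_lt (min_le_left _ _) h2
          · push_neg at hcase
            refine Or.inl (Or.inr ⟨?_, ?_⟩)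
            · rw [mem_closedBall, dist_eq_norm]; linarith
            · rw [mem_closedBall, dist_eq_norm]; push_neg; exact hcase
      rw [hmem₁, hmem₂, if_congr hiff rfl rfl, sub_self, abs_zero]
  -- D is contained in the ball of radius R
  have hDsub : D ⊆ closedBall 0 R := by
    intro v hv
    rw [mem_closedBall, dist_zero_right]
    have hnorm : ∀ u : EuclideanSpace ℝ (Fin d), ‖v‖ ≤ ‖v - u‖ + ‖u‖ := by
      intro u
      calc ‖v‖ = ‖(v - u) + u‖ := by rw [sub_add_cancel]
        _ ≤ ‖v - u‖ + ‖u‖ := norm_add_le _ _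
    rcases hv with (hv | hv) | hv
    · have h1 : ‖v - u₁‖ ≤ max r₁ r₂ := by
        have := hv.1; rwa [mem_closedBall, dist_eq_norm] at this
      have h2 : max r₁ r₂ ≤ rmax := max_le hr₁max hr₂max
      have := hnorm u₁; linarith
    · have h1 : ‖v - u₁‖ ≤ r₂ + h := by
        have := hv.1; rwa [mem_closedBall, dist_eq_norm] at this
      have := hnorm u₁; linarith
    · have h1 : ‖v - u₂‖ ≤ r₂ + h := by
        have := hv.1; rwa [mem_closedBall, dist_eq_norm] at this
      have := hnorm u₂; linarith
  -- measurability of the difference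
  have hMmeas : ∀ (ρ : ℝ) (u : EuclideanSpace ℝ (Fin d)),
      Measurable (fun v => Mball d ρ u v) := by
    intro ρ u
    unfold Mball
    refine Measurable.ite ?_ measurable_const measurable_const
    exact measurableSet_le ((continuous_id.sub continuous_const).norm.pow d).measurable
      measurable_const
  -- main integral estimate
  have hint := int_weight_indicator_le d hDmeas hR0.le hDsub
    ((hMmeas ρ₁ u₁).sub (hMmeas ρ₂ u₂)) hpt
  -- volume bounds
  have hfin1 : volume D1 ≠ ⊤ :=
    ((measure_mono Set.diff_subset).trans_lt measure_closedBall_lt_top).ne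
  have hfin2 : volume D2 ≠ ⊤ :=
    ((measure_mono Set.diff_subset).trans_lt measure_closedBall_lt_top).ne
  have hfin3 : volume D3 ≠ ⊤ :=
    ((measure_mono Set.diff_subset).trans_lt measure_closedBall_lt_top).ne
  have hvolD : (volume D).toReal ≤ (volume D1).toReal + (volume D2).toReal
      + (volume D3).toReal := by
    have hle : volume D ≤ volume D1 + volume D2 + volume D3 :=
      (measure_union_le _ _).trans (add_le_add (measure_union_le _ _) le_rfl)
    have hne : volume D1 + volume D2 + volume D3 ≠ ⊤ := by
      simp [ENNReal.add_ne_top, hfin1, hfin2, hfin3]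
    calc (volume D).toReal ≤ (volume D1 + volume D2 + volume D3).toReal :=
          ENNReal.toReal_mono hne hle
      _ = (volume D1).toReal + (volume D2).toReal + (volume D3).toReal := by
          rw [ENNReal.toReal_add (ENNReal.add_ne_top.2 ⟨hfin1, hfin2⟩) hfin3,
            ENNReal.toReal_add hfin1 hfin2]
  have hvol1 : (volume D1).toReal = cdConst d * |ρ₁ - ρ₂| * ω := by
    rw [hD1def, vol_shell d u₁ (le_min hr₁0 hr₂0) (min_le_max), ← hωdef]
    congr 1
    rcases le_total ρ₁ ρ₂ with hle | hle
    · have hr : r₁ ≤ r₂ :=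
        Real.rpow_le_rpow (by positivity) (mul_le_mul_of_nonneg_left hle hc.le) (by positivity)
      rw [max_eq_right hr, min_eq_left hr, hr₁d, hr₂d, abs_of_nonpos (by linarith)]
      ring
    · have hr : r₂ ≤ r₁ :=
        Real.rpow_le_rpow (by positivity) (mul_le_mul_of_nonneg_left hle hc.le) (by positivity)
      rw [max_eq_left hr, min_eq_right hr, hr₁d, hr₂d, abs_of_nonneg (by linarith)]
      ring
  have hshell : ((r₂ + h) ^ d - r₂ ^ d) ≤ d * R ^ (d - 1) * h := by
    have hle : r₂ + h ≤ R := by rw [hRdef]; linarith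
    have := pow_diff_le_aux d hr₂0 (le_add_of_nonneg_right hh0) hle
    simpa using this
  have hvol2 : (volume D2).toReal ≤ (d * R ^ (d - 1) * h) * ω := by
    rw [hD2def, vol_shell d u₁ hr₂0 (le_add_of_nonneg_right hh0), ← hωdef]
    exact mul_le_mul_of_nonneg_right hshell hω0
  have hvol3 : (volume D3).toReal ≤ (d * R ^ (d - 1) * h) * ω := by
    rw [hD3def, vol_shell d u₂ hr₂0 (le_add_of_nonneg_right hh0), ← hωdef]
    exact mul_le_mul_of_nonneg_right hshell hω0
  -- put everything together
  have hK0 : (0 : ℝ) ≤ 1 + R ^ 2 := by positivity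
  have hB0 : (0 : ℝ) ≤ d * R ^ (d - 1) := by positivity
  have habs : (0 : ℝ) ≤ |ρ₁ - ρ₂| := abs_nonneg _
  calc (∫ v : EuclideanSpace ℝ (Fin d),
          (1 + ‖v‖ ^ 2) * |Mball d ρ₁ u₁ v - Mball d ρ₂ u₂ v|)
      ≤ (1 + R ^ 2) * (volume D).toReal := hint
    _ ≤ (1 + R ^ 2) * (cdConst d * |ρ₁ - ρ₂| * ω + (d * R ^ (d - 1) * h) * ω
          + (d * R ^ (d - 1) * h) * ω) := by
        apply mul_le_mul_of_nonneg_left _ hK0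
        calc (volume D).toReal ≤ (volume D1).toReal + (volume D2).toReal
              + (volume D3).toReal := hvolD
          _ ≤ _ := by rw [hvol1]; exact add_le_add (add_le_add le_rfl hvol2) hvol3
    _ ≤ ((1 + R ^ 2) * ω * (cdConst d + 2 * d * R ^ (d - 1)) + 1) * (|ρ₁ - ρ₂| + h) := by
        nlinarith [mul_nonneg (mul_nonneg hK0 hω0) (mul_nonneg hB0 habs),
          mul_nonneg (mul_nonneg hK0 hω0) (mul_nonneg hc.le hh0),
          mul_nonneg (mul_nonneg hK0 hω0) (mul_nonneg hB0 hh0),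
          mul_nonneg (mul_nonneg hK0 hω0) (mul_nonneg hc.le habs),
          add_nonneg habs hh0]
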